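/- arXiv:1310.7431 — 2 statements merged into one kernel-verified Lean document; each statement's English description precedes it below -/
import Mathlib

section
/- For all t > 0 and u > 0, l(t,u) ≤ t² u⁻² · sup_{s ∈ [0,1]} (1/(2√π)) e^{-1/(4s)} s^{-3/2}, where l(t,u) = ∫₀ᵗ (t - r) · (u/(2√π)) · r^{-3/2} · e^{-u²/(4r)} dr. -/
open Set Real MeasureTheory

/-!
Substituting `s = r / u²` turns the kernel `u/(2√π) r^{-3/2} e^{-u²/(4r)}` into
`u⁻² f(s)` with `f(s) = e^{-1/(4s)} s^{-3/2}/(2√π)`. Since `f` attains its maximum on `[0, ∞)`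
at `s = 1/6 ∈ [0, 1]`, the kernel is at most `u⁻² sup_{[0,1]} f` for every `r`, and
`∫₀ᵗ (t - r) dr = t²/2 ≤ t²`.
-/

lemma rpow_mul_exp_neg_le {a x : ℝ} (ha : 0 < a) (hx : 0 ≤ x) :
    x ^ a * exp (-x) ≤ a ^ a * exp (-a) := by
  -- `y ≤ exp (y - 1)` at `y = x / a`, raised to the power `a`
  have h : (x / a) ^ a ≤ exp (x / a - 1) ^ a :=
    rpow_le_rpow (by positivity) (by linarith [add_one_le_exp (x / a - 1)]) ha.le
  rw [div_rpow hx ha.le, ← exp_mul, div_le_iff₀ (by positivity)] at h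
  calc x ^ a * exp (-x) ≤ exp ((x / a - 1) * a) * a ^ a * exp (-x) := by gcongr
    _ = a ^ a * exp (-a) := by
      rw [mul_right_comm, ← exp_add, mul_comm]
      congr 2
      field_simp
      ring

/-- The Lévy density of scale `1/2`: the law of the time at which a Brownian motion with
variance `2r` at time `r` first hits level `1`. -/
noncomputable def levyDensity (s : ℝ) : ℝ :=
  1 / (2 * √π) * exp (-1 / (4 * s)) * s ^ (-(3:ℝ) / 2)

lemma levyDensity_nonneg {s : ℝ} (hs : 0 ≤ s) : 0 ≤ levyDensity s := by
  unfold levyDensity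
  positivity

lemma levyDensity_eq {s : ℝ} (hs : 0 ≤ s) :
    levyDensity s =
      1 / (2 * √π) * 4 ^ (3 / 2 : ℝ) * ((4 * s)⁻¹ ^ (3 / 2 : ℝ) * exp (-(4 * s)⁻¹)) := by
  rw [levyDensity, inv_rpow (by positivity), mul_rpow (by norm_num) hs,
    show -(3:ℝ) / 2 = -(3 / 2) by ring, rpow_neg hs, mul_inv, neg_div, one_div (4 * s)]
  have : (4 : ℝ) ^ (3 / 2 : ℝ) ≠ 0 := by positivity
  field_simp

lemma isMaxOn_levyDensity : IsMaxOn levyDensity (Ici 0) (1 / 6) := by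
  refine isMaxOn_iff.2 fun s (hs : 0 ≤ s) => ?_
  rw [levyDensity_eq hs, levyDensity_eq (by norm_num),
    show (4 * (1 / 6 : ℝ))⁻¹ = 3 / 2 by norm_num]
  exact mul_le_mul_of_nonneg_left (rpow_mul_exp_neg_le (by norm_num) (by positivity))
    (by positivity)

lemma levyDensity_le_sSup {s : ℝ} (hs : 0 ≤ s) :
    levyDensity s ≤ sSup (levyDensity '' Icc 0 1) := by
  have hbdd : BddAbove (levyDensity '' Icc 0 1) :=
    ⟨levyDensity (1 / 6), forall_mem_image.2 fun x hx => isMaxOn_levyDensity hx.1⟩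
  exact (isMaxOn_levyDensity hs).trans (le_csSup hbdd ⟨1 / 6, by norm_num, rfl⟩)

lemma rpow_neg_two_mul_levyDensity_div_sq {u r : ℝ} (hu : 0 < u) (hr : 0 < r) :
    u ^ (-2 : ℝ) * levyDensity (r / u ^ 2) =
      1 / (2 * √π) * u * r ^ (-(3:ℝ) / 2) * exp (-u ^ 2 / (4 * r)) := by
  have hu3 : (u ^ 2) ^ (-(3:ℝ) / 2) = (u ^ 3)⁻¹ := by
    rw [← rpow_natCast, ← rpow_mul hu.le, show (2 : ℕ) * (-(3:ℝ) / 2) = -(3 : ℕ) by norm_num,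
      rpow_neg hu.le, rpow_natCast]
  rw [levyDensity, div_rpow hr.le (by positivity), hu3, rpow_neg hu.le, rpow_two]
  field_simp

lemma intervalIntegral_sub_mul_le {f : ℝ → ℝ} {t C : ℝ} (ht : 0 ≤ t)
    (hf₀ : ∀ r ∈ Ioc 0 t, 0 ≤ f r) (hfC : ∀ r ∈ Ioc 0 t, f r ≤ C) :
    ∫ r in (0:ℝ)..t, (t - r) * f r ≤ t ^ 2 / 2 * C := by
  calc ∫ r in (0:ℝ)..t, (t - r) * f r ≤ ∫ r in (0:ℝ)..t, (t - r) * C := by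
        rw [intervalIntegral.integral_of_le ht, intervalIntegral.integral_of_le ht]
        refine integral_mono_of_nonneg ?_ (by fun_prop : Continuous _).integrableOn_Ioc ?_
        all_goals filter_upwards [ae_restrict_mem measurableSet_Ioc] with r hr
        · exact mul_nonneg (sub_nonneg.2 hr.2) (hf₀ r hr)
        · exact mul_le_mul_of_nonneg_left (hfC r hr) (sub_nonneg.2 hr.2)
    _ = t ^ 2 / 2 * C := by
      rw [intervalIntegral.integral_mul_const,
        intervalIntegral.integral_sub intervalIntegrable_const
          intervalIntegral.intervalIntegrable_id,
        intervalIntegral.integral_const, integral_id]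
      simp only [sub_zero, smul_eq_mul]
      ring

theorem stmt1 (t u : ℝ) (ht : 0 < t) (hu : 0 < u) :
    (∫ r in (0:ℝ)..t,
        (t - r) * (1 / (2 * Real.sqrt Real.pi)) * u * r ^ (-(3:ℝ)/2) * Real.exp (-u^2 / (4*r)))
      ≤ t^2 * u ^ (-(2:ℝ)) *
        sSup ((fun s => (1 / (2 * Real.sqrt Real.pi)) * Real.exp (-1/(4*s)) * s ^ (-(3:ℝ)/2)) ''
          Icc (0:ℝ) 1) := by
  set M := sSup (levyDensity '' Icc 0 1)
  have hM : 0 ≤ M := (levyDensity_nonneg le_rfl).trans (levyDensity_le_sSup le_rfl)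
  calc _ = ∫ r in (0:ℝ)..t,
          (t - r) * (1 / (2 * √π) * u * r ^ (-(3:ℝ) / 2) * exp (-u ^ 2 / (4 * r))) := by
        simp only [mul_assoc]
    _ ≤ t ^ 2 / 2 * (u ^ (-2 : ℝ) * M) := by
      refine intervalIntegral_sub_mul_le ht.le (fun r hr => ?_) fun r hr => ?_
      · have := hr.1
        positivity
      · rw [← rpow_neg_two_mul_levyDensity_div_sq hu hr.1]
        gcongr
        exact levyDensity_le_sSup (div_nonneg hr.1.le (sq_nonneg u))
    _ ≤ t ^ 2 * u ^ (-2 : ℝ) * M := by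
      have : 0 ≤ t ^ 2 * u ^ (-2 : ℝ) * M := by positivity
      linarith
end

section
/- For C ≠ 0 let φ_C(t) = (1 − e^{−2√2 C t})/(2√2 C) and define F(t) = ∫₀¹ (1 − √(2/π)∫₀^{r/√(φ_C(t))} e^{−v²/2} dv) dr for t > 0. Then F(t) = √(2/π)·√(φ_C(t))·∫₀^{1/√(φ_C(t))} v e^{−v²/2} dv + √(2/π)·∫_{1/√(φ_C(t))}^{∞} e^{−v²/2} dv, and lim_{t→0+} F(t)/√(φ_C(t)) = √(2/π). -/
/-!
Write `s = √φ_C(t)` and `g v = exp (-v²/2)`. Substituting `v = r/s` and integrating by parts,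
`∫₀¹ ∫₀^{r/s} g = ∫₀^{1/s} (1 - s v) g(v) dv`, and since `√(2/π) ∫₀^∞ g = 1` this gives the
identity. Dividing by `s`, the first term tends to `√(2/π) ∫₀^∞ v g = √(2/π)` as `1/s → ∞`,
while the Mills-ratio bound `a ∫_a^∞ g ≤ ∫_a^∞ v g = g a` kills the second; `1/s → ∞` because
`φ_C(t) → 0⁺`.
-/

open Filter Topology Set MeasureTheory intervalIntegral Real

theorem integral_integral_eq_mul_integral_sub {f : ℝ → ℝ} (hf : Continuous f) (a : ℝ) :
    ∫ u in (0:ℝ)..a, ∫ v in (0:ℝ)..u, f v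
      = a * (∫ v in (0:ℝ)..a, f v) - ∫ v in (0:ℝ)..a, v * f v := by
  have hderiv (u : ℝ) : HasDerivAt (fun u => u * (∫ v in (0:ℝ)..u, f v) - ∫ v in (0:ℝ)..u, v * f v)
      (∫ v in (0:ℝ)..u, f v) u := by
    have hF := (hf.integral_hasStrictDerivAt 0 u).hasDerivAt
    have hvF := ((continuous_id.mul hf).integral_hasStrictDerivAt 0 u).hasDerivAt
    exact (((hasDerivAt_id' u).fun_mul hF).fun_sub hvF).congr_deriv (by simp)
  rw [integral_eq_sub_of_hasDerivAt (fun u _ => hderiv u)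
    ((continuous_primitive (fun _ _ => hf.intervalIntegrable _ _) 0).intervalIntegrable 0 a)]
  simp

theorem continuous_exp_neg_sq_div_two : Continuous fun v : ℝ => exp (-v ^ 2 / 2) := by
  fun_prop

theorem integrable_exp_neg_sq_div_two : Integrable fun v : ℝ => exp (-v ^ 2 / 2) := by
  simpa [neg_div, div_eq_inv_mul] using integrable_exp_neg_mul_sq (b := (1/2 : ℝ)) (by norm_num)

theorem integral_Ioi_zero_exp_neg_sq_div_two :
    ∫ v in Ioi (0:ℝ), exp (-v ^ 2 / 2) = √(π / 2) := by
  have h : √(π / (1 / 2)) / 2 = √(π / 2) := by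
    rw [div_eq_iff two_ne_zero, ← sqrt_sq (zero_le_two (α := ℝ)), ← sqrt_mul (by positivity)]
    ring_nf
  rw [← h, ← integral_gaussian_Ioi]
  ring_nf

theorem integral_Ici_exp_neg_sq_div_two (a : ℝ) :
    ∫ v in Ici a, exp (-v ^ 2 / 2) = √(π / 2) - ∫ v in (0:ℝ)..a, exp (-v ^ 2 / 2) := by
  rw [integral_Ici_eq_integral_Ioi, ← integral_Ioi_zero_exp_neg_sq_div_two,
    ← integral_Ioi_sub_Ioi' integrable_exp_neg_sq_div_two.integrableOn
      integrable_exp_neg_sq_div_two.integrableOn, sub_sub_cancel]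

theorem hasDerivAt_neg_exp_neg_sq_div_two (v : ℝ) :
    HasDerivAt (fun u : ℝ => -exp (-u ^ 2 / 2)) (v * exp (-v ^ 2 / 2)) v :=
  (((hasDerivAt_pow 2 v).fun_neg.div_const 2).exp).fun_neg.congr_deriv (by push_cast; ring)

theorem tendsto_exp_neg_sq_div_two_atTop :
    Tendsto (fun a : ℝ => exp (-a ^ 2 / 2)) atTop (𝓝 0) := by
  refine tendsto_exp_atBot.comp ?_
  simpa [neg_div] using (tendsto_pow_atTop (α := ℝ) two_ne_zero).atTop_div_const (two_pos (α := ℝ))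

theorem integral_mul_exp_neg_sq_div_two (a : ℝ) :
    ∫ v in (0:ℝ)..a, v * exp (-v ^ 2 / 2) = 1 - exp (-a ^ 2 / 2) := by
  rw [integral_eq_sub_of_hasDerivAt (fun v _ => hasDerivAt_neg_exp_neg_sq_div_two v)
    ((continuous_id.mul continuous_exp_neg_sq_div_two).intervalIntegrable 0 a)]
  norm_num
  ring

theorem tendsto_integral_mul_exp_neg_sq_div_two_atTop :
    Tendsto (fun a : ℝ => ∫ v in (0:ℝ)..a, v * exp (-v ^ 2 / 2)) atTop (𝓝 1) := by
  simpa [integral_mul_exp_neg_sq_div_two] using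
    (tendsto_const_nhds (x := (1:ℝ))).sub tendsto_exp_neg_sq_div_two_atTop

theorem integrableOn_Ioi_mul_exp_neg_sq_div_two {a : ℝ} (ha : 0 ≤ a) :
    IntegrableOn (fun v : ℝ => v * exp (-v ^ 2 / 2)) (Ioi a) :=
  integrableOn_Ioi_deriv_of_nonneg' (fun v _ => hasDerivAt_neg_exp_neg_sq_div_two v)
    (fun _ hv => mul_nonneg (ha.trans hv.le) (exp_pos _).le) tendsto_exp_neg_sq_div_two_atTop.neg

theorem integral_Ioi_mul_exp_neg_sq_div_two {a : ℝ} (ha : 0 ≤ a) :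
    ∫ v in Ioi a, v * exp (-v ^ 2 / 2) = exp (-a ^ 2 / 2) := by
  rw [integral_Ioi_of_hasDerivAt_of_nonneg' (fun v _ => hasDerivAt_neg_exp_neg_sq_div_two v)
    (fun _ hv => mul_nonneg (ha.trans hv.le) (exp_pos _).le) tendsto_exp_neg_sq_div_two_atTop.neg]
  ring

theorem mul_integral_Ici_exp_neg_sq_div_two_le {a : ℝ} (ha : 0 < a) :
    a * ∫ v in Ici a, exp (-v ^ 2 / 2) ≤ exp (-a ^ 2 / 2) :=
  calc a * ∫ v in Ici a, exp (-v ^ 2 / 2)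
      = ∫ v in Ioi a, a * exp (-v ^ 2 / 2) := by
        rw [integral_Ici_eq_integral_Ioi, MeasureTheory.integral_const_mul]
    _ ≤ ∫ v in Ioi a, v * exp (-v ^ 2 / 2) :=
        setIntegral_mono_on (integrable_exp_neg_sq_div_two.integrableOn.const_mul a)
          (integrableOn_Ioi_mul_exp_neg_sq_div_two ha.le) measurableSet_Ioi
          (fun v hv => mul_le_mul_of_nonneg_right (le_of_lt hv) (exp_pos _).le)
    _ = exp (-a ^ 2 / 2) := integral_Ioi_mul_exp_neg_sq_div_two ha.le

theorem tendsto_mul_integral_Ici_exp_neg_sq_div_two_atTop :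
    Tendsto (fun a : ℝ => a * ∫ v in Ici a, exp (-v ^ 2 / 2)) atTop (𝓝 0) := by
  refine tendsto_of_tendsto_of_tendsto_of_le_of_le' tendsto_const_nhds
    tendsto_exp_neg_sq_div_two_atTop ?_ ?_
  · filter_upwards [eventually_ge_atTop 0] with a ha
    exact mul_nonneg ha (setIntegral_nonneg measurableSet_Ici fun v _ => (exp_pos _).le)
  · filter_upwards [eventually_gt_atTop 0] with a ha
    exact mul_integral_Ici_exp_neg_sq_div_two_le ha

theorem integral_one_sub_integral_exp_neg_sq_div_two {s : ℝ} (hs : s ≠ 0) :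
    ∫ r in (0:ℝ)..1, (1 - √(2 / π) * ∫ v in (0:ℝ)..(r / s), exp (-v ^ 2 / 2))
      = √(2 / π) * s * (∫ v in (0:ℝ)..(1 / s), v * exp (-v ^ 2 / 2))
        + √(2 / π) * ∫ v in Ici (1 / s), exp (-v ^ 2 / 2) := by
  have hc : √(2 / π) * √(π / 2) = 1 := by
    rw [← sqrt_mul (by positivity), div_mul_div_comm, mul_comm 2 π, div_self (by positivity),
      sqrt_one]
  have hG : Continuous fun u : ℝ => ∫ v in (0:ℝ)..u, exp (-v ^ 2 / 2) :=
    continuous_primitive (fun _ _ => continuous_exp_neg_sq_div_two.intervalIntegrable _ _) 0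
  have hGs : Continuous fun r : ℝ => √(2 / π) * ∫ v in (0:ℝ)..(r / s), exp (-v ^ 2 / 2) :=
    continuous_const.mul (hG.comp (continuous_id.div_const s))
  rw [integral_sub intervalIntegrable_const (hGs.intervalIntegrable 0 1),
    intervalIntegral.integral_const_mul,
    integral_comp_div (fun u => ∫ v in (0:ℝ)..u, exp (-v ^ 2 / 2)) hs, zero_div, smul_eq_mul,
    integral_integral_eq_mul_integral_sub continuous_exp_neg_sq_div_two,
    integral_Ici_exp_neg_sq_div_two]
  simp only [intervalIntegral.integral_const, sub_zero, smul_eq_mul, mul_one]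
  linear_combination
    -hc - √(2 / π) * (∫ v in (0:ℝ)..(1 / s), exp (-v ^ 2 / 2)) * mul_one_div_cancel hs

theorem one_sub_exp_neg_mul_div_pos {k t : ℝ} (hk : k ≠ 0) (ht : 0 < t) :
    0 < (1 - exp (-k * t)) / k := by
  rcases hk.lt_or_gt with hk | hk
  · have : 1 < exp (-k * t) := one_lt_exp_iff.2 (mul_pos (neg_pos.2 hk) ht)
    exact div_pos_of_neg_of_neg (by linarith) hk
  · have : exp (-k * t) < 1 := exp_lt_one_iff.2 (mul_neg_of_neg_of_pos (neg_neg_iff_pos.2 hk) ht)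
    exact div_pos (by linarith) hk

theorem tendsto_one_sub_exp_neg_mul_div_nhdsGT_zero {k : ℝ} (hk : k ≠ 0) :
    Tendsto (fun t => (1 - exp (-k * t)) / k) (𝓝[>] 0) (𝓝[>] 0) := by
  refine tendsto_nhdsWithin_of_tendsto_nhds_of_eventually_within _ ?_ ?_
  · have hcont : Continuous fun t => (1 - exp (-k * t)) / k := by fun_prop
    simpa using (hcont.tendsto 0).mono_left nhdsWithin_le_nhds
  · filter_upwards [self_mem_nhdsWithin] with t ht
    exact one_sub_exp_neg_mul_div_pos hk ht

theorem tendsto_one_div_sqrt_atTop {α : Type*} {l : Filter α} {f : α → ℝ}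
    (hf : Tendsto f l (𝓝[>] 0)) : Tendsto (fun x => 1 / √(f x)) l atTop := by
  refine (tendsto_sqrt_atTop.comp hf.inv_tendsto_nhdsGT_zero).congr fun x => ?_
  simp [sqrt_inv]

theorem stmt10 (C : ℝ) (hC : C ≠ 0) (φ : ℝ → ℝ)
    (hφ : ∀ t, φ t = (1 - Real.exp (-2 * Real.sqrt 2 * C * t)) / (2 * Real.sqrt 2 * C))
    (F : ℝ → ℝ)
    (hF : ∀ t > (0:ℝ), F t = ∫ r in (0:ℝ)..1,
      (1 - Real.sqrt (2/Real.pi) * ∫ v in (0:ℝ)..(r / Real.sqrt (φ t)), Real.exp (-v^2/2))) :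
    (∀ t > (0:ℝ), F t
      = Real.sqrt (2/Real.pi) * Real.sqrt (φ t) *
          (∫ v in (0:ℝ)..(1 / Real.sqrt (φ t)), v * Real.exp (-v^2/2))
        + Real.sqrt (2/Real.pi) * ∫ v in Set.Ici (1 / Real.sqrt (φ t)), Real.exp (-v^2/2)) ∧
    Tendsto (fun t => F t / Real.sqrt (φ t)) (nhdsWithin 0 (Ioi 0))
      (nhds (Real.sqrt (2/Real.pi))) := by
  have hk : 2 * √2 * C ≠ 0 := by positivity
  have hφk : φ = fun t => (1 - exp (-(2 * √2 * C) * t)) / (2 * √2 * C) :=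
    funext fun t => by rw [hφ]; ring_nf
  have hs : ∀ t > (0:ℝ), 0 < √(φ t) := fun t ht =>
    sqrt_pos.2 (hφk ▸ one_sub_exp_neg_mul_div_pos hk ht)
  have hF' : ∀ t > (0:ℝ), F t
      = √(2 / π) * √(φ t) * (∫ v in (0:ℝ)..(1 / √(φ t)), v * exp (-v ^ 2 / 2))
        + √(2 / π) * ∫ v in Ici (1 / √(φ t)), exp (-v ^ 2 / 2) := fun t ht =>
    (hF t ht).trans (integral_one_sub_integral_exp_neg_sq_div_two (hs t ht).ne')
  refine ⟨hF', ?_⟩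
  have hlim := ((tendsto_integral_mul_exp_neg_sq_div_two_atTop.const_mul √(2 / π)).add
    (tendsto_mul_integral_Ici_exp_neg_sq_div_two_atTop.const_mul √(2 / π))).comp
    (tendsto_one_div_sqrt_atTop (hφk ▸ tendsto_one_sub_exp_neg_mul_div_nhdsGT_zero hk))
  rw [mul_one, mul_zero, add_zero] at hlim
  refine hlim.congr' ?_
  filter_upwards [self_mem_nhdsWithin] with t ht
  rw [Function.comp_apply, hF' t ht]
  field_simp [(hs t ht).ne']
end
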